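/- arXiv:2205.09990 — 2 statements merged into one kernel-verified Lean document; each statement's English description precedes it below -/
import Mathlib

section
/- For all h, h' ∈ ℝ^d, the Set Transformer applied to the pair input (h, h') satisfies φ_λ((h, h')) = W( h + α(h,h') (h' − h) ) + b, where α(h,h') = p₂(1−p₁) + (1−p₂)(1−p̃₁) with p₁ = softmax(Q₁^{(h,h')} (K₁^{(h,h')})ᵀ/√d)_{1,1}, p̃₁ = softmax(Q₁^{(h,h')} (K₁^{(h,h')})ᵀ/√d)_{2,1}, p₂ = softmax(Q₂ (K₂^{(h,h')})ᵀ/√d)_{1,1}; moreover α(h,h') ∈ [0,1]. -/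
open Matrix Real BigOperators

noncomputable section

/-- Row-wise softmax of a real matrix. -/
def softmaxM {m n : ℕ} (M : Matrix (Fin m) (Fin n) ℝ) : Matrix (Fin m) (Fin n) ℝ :=
  Matrix.of fun i j => Real.exp (M i j) / ∑ k, Real.exp (M i k)

/-- The attention mechanism `A(Q,K,V) = softmax(Q Kᵀ / √d) V`. -/
def attn {m n d : ℕ} (Q : Matrix (Fin m) (Fin d) ℝ) (K V : Matrix (Fin n) (Fin d) ℝ) :
    Matrix (Fin m) (Fin d) ℝ :=
  softmaxM ((Real.sqrt (d : ℝ))⁻¹ • (Q * Kᵀ)) * V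

/-- Parameters of the Set Transformer. -/
structure STParams (d : ℕ) where
  W1Q : Matrix (Fin d) (Fin d) ℝ
  W1K : Matrix (Fin d) (Fin d) ℝ
  W1V : Matrix (Fin d) (Fin d) ℝ
  W2Q : Matrix (Fin d) (Fin d) ℝ
  W2K : Matrix (Fin d) (Fin d) ℝ
  W2V : Matrix (Fin d) (Fin d) ℝ
  b1Q : Matrix (Fin 1) (Fin d) ℝ
  b1K : Matrix (Fin 1) (Fin d) ℝ
  b1V : Matrix (Fin 1) (Fin d) ℝ
  b2Q : Matrix (Fin 1) (Fin d) ℝ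
  b2K : Matrix (Fin 1) (Fin d) ℝ
  b2V : Matrix (Fin 1) (Fin d) ℝ
  S : Matrix (Fin 1) (Fin d) ℝ

/-- `1_n bᵀ`, the matrix whose `n` rows are all equal to the row vector `b`. -/
def onesRow {d : ℕ} (n : ℕ) (b : Matrix (Fin 1) (Fin d) ℝ) : Matrix (Fin n) (Fin d) ℝ :=
  Matrix.of fun _ j => b 0 j

/-- The Set Transformer `φ_λ` applied to an input of `n` vectors in `ℝ^d`, stacked as
the rows of `H1`.  The output is the (transposed) single row of `A(Q₂, K₂, V₂)`,
a vector in `ℝ^d`. -/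
def setTransformer {d n : ℕ} (P : STParams d) (H1 : Matrix (Fin n) (Fin d) ℝ) : Fin d → ℝ :=
  let Q1 := H1 * P.W1Q + onesRow n P.b1Q
  let K1 := H1 * P.W1K + onesRow n P.b1K
  let V1 := H1 * P.W1V + onesRow n P.b1V
  let H2 := attn Q1 K1 V1
  let Q2 := P.S * P.W2Q + P.b2Q
  let K2 := H2 * P.W2K + onesRow n P.b2K
  let V2 := H2 * P.W2V + onesRow n P.b2V
  fun j => attn Q2 K2 V2 0 j

/-- The singleton input `(h)`. -/
def singletonInput {d : ℕ} (h : Fin d → ℝ) : Matrix (Fin 1) (Fin d) ℝ :=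
  Matrix.of ![h]

/-- `W = (W₁^V W₂^V)ᵀ`. -/
def Wmat {d : ℕ} (P : STParams d) : Matrix (Fin d) (Fin d) ℝ :=
  (P.W1V * P.W2V)ᵀ

/-- `b = (b₁^V W₂^V + b₂^V)ᵀ`, as a vector in `ℝ^d`. -/
def bvec {d : ℕ} (P : STParams d) : Fin d → ℝ :=
  fun j => (P.b1V * P.W2V + P.b2V) 0 j

/-- The pair input `(h, h')`. -/
def pairInput {d : ℕ} (h h' : Fin d → ℝ) : Matrix (Fin 2) (Fin d) ℝ :=
  Matrix.of ![h, h']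

/-- The attention coefficient `α(h,h') = p₂(1−p₁) + (1−p₂)(1−p̃₁)` where
`p₁ = softmax(Q₁ K₁ᵀ/√d)_{1,1}`, `p̃₁ = softmax(Q₁ K₁ᵀ/√d)_{2,1}` and
`p₂ = softmax(Q₂ K₂ᵀ/√d)_{1,1}`, computed on the pair input `(h,h')`. -/
def alphaCoef {d : ℕ} (P : STParams d) (h h' : Fin d → ℝ) : ℝ :=
  let H1 := pairInput h h'
  let Q1 := H1 * P.W1Q + onesRow 2 P.b1Q
  let K1 := H1 * P.W1K + onesRow 2 P.b1K
  let V1 := H1 * P.W1V + onesRow 2 P.b1V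
  let H2 := attn Q1 K1 V1
  let Q2 := P.S * P.W2Q + P.b2Q
  let K2 := H2 * P.W2K + onesRow 2 P.b2K
  let p1 := softmaxM ((Real.sqrt (d : ℝ))⁻¹ • (Q1 * K1ᵀ)) 0 0
  let p1t := softmaxM ((Real.sqrt (d : ℝ))⁻¹ • (Q1 * K1ᵀ)) 1 0
  let p2 := softmaxM ((Real.sqrt (d : ℝ))⁻¹ • (Q2 * K2ᵀ)) 0 0
  p2 * (1 - p1) + (1 - p2) * (1 - p1t)

lemma softmaxM_two_mem {m : ℕ} (M : Matrix (Fin m) (Fin 2) ℝ) (i : Fin m) (j : Fin 2) :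
    softmaxM M i j ∈ Set.Icc (0 : ℝ) 1 := by
  have h0 := Real.exp_pos (M i 0)
  have h1 := Real.exp_pos (M i 1)
  constructor
  · simp only [softmaxM, Matrix.of_apply, Fin.sum_univ_two]
    positivity
  · simp only [softmaxM, Matrix.of_apply, Fin.sum_univ_two]
    rw [div_le_one (by positivity)]
    fin_cases j <;> simp <;> nlinarith

lemma softmaxM_two_sum {m : ℕ} (M : Matrix (Fin m) (Fin 2) ℝ) (i : Fin m) :
    softmaxM M i 0 + softmaxM M i 1 = 1 := by
  have h0 := Real.exp_pos (M i 0)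
  have h1 := Real.exp_pos (M i 1)
  simp only [softmaxM, Matrix.of_apply, Fin.sum_univ_two]
  rw [← add_div, div_self (by positivity)]

lemma attn_apply {m n d : ℕ} (Q : Matrix (Fin m) (Fin d) ℝ) (K V : Matrix (Fin n) (Fin d) ℝ)
    (i : Fin m) (j : Fin d) :
    attn Q K V i j = ∑ k, softmaxM ((Real.sqrt (d : ℝ))⁻¹ • (Q * Kᵀ)) i k * V k j := by
  simp [attn, Matrix.mul_apply]

lemma onesRow_mul {d n : ℕ} (b : Matrix (Fin 1) (Fin d) ℝ) (A : Matrix (Fin d) (Fin d) ℝ) :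
    onesRow n b * A = onesRow n (b * A) := by
  ext i j
  simp [onesRow, Matrix.mul_apply]

/-- For all `h, h' ∈ ℝ^d`, the Set Transformer applied to the pair input
`(h, h')` satisfies `φ_λ((h,h')) = W(h + α(h,h')(h' − h)) + b`, and moreover
`α(h,h') ∈ [0,1]`. -/
theorem setTransformer_pair {d : ℕ} (P : STParams d) (h h' : Fin d → ℝ) :
    setTransformer P (pairInput h h') =
      Wmat P *ᵥ (h + alphaCoef P h h' • (h' - h)) + bvec P ∧
    alphaCoef P h h' ∈ Set.Icc (0 : ℝ) 1 := by
  classical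
  set H1 : Matrix (Fin 2) (Fin d) ℝ := pairInput h h' with hH1
  set Q1 : Matrix (Fin 2) (Fin d) ℝ := H1 * P.W1Q + onesRow 2 P.b1Q with hQ1
  set K1 : Matrix (Fin 2) (Fin d) ℝ := H1 * P.W1K + onesRow 2 P.b1K with hK1
  set V1 : Matrix (Fin 2) (Fin d) ℝ := H1 * P.W1V + onesRow 2 P.b1V with hV1
  set s1 : Matrix (Fin 2) (Fin 2) ℝ :=
    softmaxM ((Real.sqrt (d : ℝ))⁻¹ • (Q1 * K1ᵀ)) with hs1
  set H2 : Matrix (Fin 2) (Fin d) ℝ := attn Q1 K1 V1 with hH2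
  set Q2 : Matrix (Fin 1) (Fin d) ℝ := P.S * P.W2Q + P.b2Q with hQ2
  set K2 : Matrix (Fin 2) (Fin d) ℝ := H2 * P.W2K + onesRow 2 P.b2K with hK2
  set V2 : Matrix (Fin 2) (Fin d) ℝ := H2 * P.W2V + onesRow 2 P.b2V with hV2
  set s2 : Matrix (Fin 1) (Fin 2) ℝ :=
    softmaxM ((Real.sqrt (d : ℝ))⁻¹ • (Q2 * K2ᵀ)) with hs2
  have hα : alphaCoef P h h' = s2 0 0 * (1 - s1 0 0) + (1 - s2 0 0) * (1 - s1 1 0) := rfl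
  have hmem1 := softmaxM_two_mem ((Real.sqrt (d : ℝ))⁻¹ • (Q1 * K1ᵀ))
  have hmem2 := softmaxM_two_mem ((Real.sqrt (d : ℝ))⁻¹ • (Q2 * K2ᵀ))
  have hp1 : s1 0 0 ∈ Set.Icc (0:ℝ) 1 := hmem1 0 0
  have hp1t : s1 1 0 ∈ Set.Icc (0:ℝ) 1 := hmem1 1 0
  have hp2 : s2 0 0 ∈ Set.Icc (0:ℝ) 1 := hmem2 0 0
  obtain ⟨hq0, hq1⟩ := hp1
  obtain ⟨hr0, hr1⟩ := hp1t
  obtain ⟨hp0, hp1'⟩ := hp2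
  constructor
  · funext j
    have houts : setTransformer P (pairInput h h') j = attn Q2 K2 V2 0 j := rfl
    rw [houts, attn_apply, Fin.sum_univ_two, ← hs2]
    have hV2r : ∀ k : Fin 2, V2 k j =
        s1 k 0 * (V1 * P.W2V) 0 j + s1 k 1 * (V1 * P.W2V) 1 j + P.b2V 0 j := by
      intro k
      have hH2r : ∀ l, H2 k l = s1 k 0 * V1 0 l + s1 k 1 * V1 1 l := by
        intro l
        rw [hH2, attn_apply, Fin.sum_univ_two]
      rw [hV2]
      simp only [Matrix.add_apply, Matrix.mul_apply, onesRow, Matrix.of_apply]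
      congr 1
      calc ∑ l, H2 k l * P.W2V l j
          = ∑ l, (s1 k 0 * (V1 0 l * P.W2V l j) + s1 k 1 * (V1 1 l * P.W2V l j)) := by
            refine Finset.sum_congr rfl fun l _ => ?_
            rw [hH2r l]; ring
        _ = s1 k 0 * ∑ l, V1 0 l * P.W2V l j + s1 k 1 * ∑ l, V1 1 l * P.W2V l j := by
            rw [Finset.sum_add_distrib, Finset.mul_sum, Finset.mul_sum]
    have hV1W : V1 * P.W2V = H1 * (P.W1V * P.W2V) + onesRow 2 (P.b1V * P.W2V) := by
      rw [hV1, Matrix.add_mul, Matrix.mul_assoc, onesRow_mul]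
    have hUa : ∀ m : Fin 2, (V1 * P.W2V) m j
        = (H1 * (P.W1V * P.W2V)) m j + (P.b1V * P.W2V) 0 j := by
      intro m; rw [hV1W]; simp [onesRow]
    set a0 : ℝ := (H1 * (P.W1V * P.W2V)) 0 j with ha0
    set a1 : ℝ := (H1 * (P.W1V * P.W2V)) 1 j with ha1
    set c : ℝ := (P.b1V * P.W2V) 0 j with hc
    have hrhs : (Wmat P *ᵥ (h + alphaCoef P h h' • (h' - h)) + bvec P) j
        = a0 + alphaCoef P h h' * (a1 - a0) + c + P.b2V 0 j := by
      have ha0' : a0 = ∑ t, (P.W1V * P.W2V) t j * h t := by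
        rw [ha0, Matrix.mul_apply]
        refine Finset.sum_congr rfl fun t _ => ?_
        rw [hH1]; simp [pairInput, mul_comm]
      have ha1' : a1 = ∑ t, (P.W1V * P.W2V) t j * h' t := by
        rw [ha1, Matrix.mul_apply]
        refine Finset.sum_congr rfl fun t _ => ?_
        rw [hH1]; simp [pairInput, mul_comm]
      have : (Wmat P *ᵥ (h + alphaCoef P h h' • (h' - h))) j
          = ∑ t, (P.W1V * P.W2V) t j * (h t + alphaCoef P h h' * (h' t - h t)) := by
        simp [Wmat, Matrix.mulVec, dotProduct, Matrix.transpose_apply]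
      rw [Pi.add_apply, this]
      have hsum : ∑ t, (P.W1V * P.W2V) t j * (h t + alphaCoef P h h' * (h' t - h t))
          = a0 + alphaCoef P h h' * (a1 - a0) := by
        rw [ha0', ha1', ← Finset.sum_sub_distrib, Finset.mul_sum, ← Finset.sum_add_distrib]
        refine Finset.sum_congr rfl fun t _ => ?_
        ring
      rw [hsum]
      simp [bvec, c]
      ring
    rw [hrhs, hV2r 0, hV2r 1, hUa 0, hUa 1, hα]
    have e1 : s1 0 1 = 1 - s1 0 0 := by
      have := softmaxM_two_sum ((Real.sqrt (d : ℝ))⁻¹ • (Q1 * K1ᵀ)) 0; rw [← hs1] at this; linarith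
    have e2 : s1 1 1 = 1 - s1 1 0 := by
      have := softmaxM_two_sum ((Real.sqrt (d : ℝ))⁻¹ • (Q1 * K1ᵀ)) 1; rw [← hs1] at this; linarith
    have e3 : s2 0 1 = 1 - s2 0 0 := by
      have := softmaxM_two_sum ((Real.sqrt (d : ℝ))⁻¹ • (Q2 * K2ᵀ)) 0; rw [← hs2] at this; linarith
    rw [e1, e2, e3]
    ring
  · rw [hα]
    constructor
    · nlinarith
    · nlinarith

end
end

section
/- (Proposition 1.) Consider binary-class tasks in ℝ^d: a fixed task t with support points x^s_{t,i} ∈ ℝ^d indexed by disjoint nonempty finite class index sets I_{t,1}, I_{t,2}, query points x^q_{t,1},…,x^q_{t,n} ∈ ℝ^d, and a parameter θ ∈ ℝ^d. Define class means c'_k = (1/|I_{t,k}|) ∑_{i∈I_{t,k}} x^s_{t,i}, z_{t,i} = ⟨x^q_{t,i} − (c'_1 + c'_2)/2, θ⟩, ψ(z) = e^z/(1+e^z), L_singleton = (1/n) ∑_{i=1}^n 1/(1+exp(z_{t,i})), and c = (1/n) ∑_{i=1}^n (1/4) ψ(z_{t,i})(ψ(z_{t,i}) − 1/2)/(1+exp(z_{t,i})).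 Let (t', σ) range over a finite probability space, where each outcome consists of a second task with support points x^s_{t',j} indexed by disjoint nonempty finite class index sets I_{t',1}, I_{t',2}, a permutation σ of {1,2}, and mixing coefficients α_{ij}^{(t,t')} ∈ [0,1]. Define δ_{t,t',σ,k} = (1/(|I_{t,k}| |I_{t',σ(k)}|)) ∑_{i∈I_{t,k}} ∑_{j∈I_{t',σ(k)}} α_{ij}^{(t,t')} (x^s_{t',j} − x^s_{t,i}) ∈ ℝ^d and δ_{t,t',σ} = δ_{t,t',σ,1} + δ_{t,t',σ,2}, and assume α is balanced: E_{t',σ}[δ_{t,t',σ}] = 0. For scalars (c_1, c_2) ∈ ℝ², define L(c_1, c_2) = (1/n) ∑_{i=1}^n 1/(1+exp(⟨x^q_{t,i}, θ⟩ − c_1/2 − c_2/2)), and set c_k = θᵀ c'_k and Δ_k = θᵀ δ_{t,t',σ,k} for k = 1, 2. Then the second-order approximation of E_{t',σ}[L_mix] — the expectation over (t',σ) of the value at γ = 1 of the degree-2 Taylor polynomial at γ = 0 of γ ↦ L(c_1 + γΔ_1, c_2 + γΔ_2) — equals L_singleton + c · θᵀ E_{t',σ}[δ_{t,t',σ} δ_{t,t',σ}ᵀ]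 θ. -/
open Matrix Real BigOperators

noncomputable section

lemma prop1_alg1 (s a D : ℝ) (hD : D ≠ 0) : s / 2 * a / D ^ 2 = a / (2 * D ^ 2) * s := by
  have : D ^ 2 ≠ 0 := pow_ne_zero _ hD
  field_simp

lemma prop1_alg2 (s a D : ℝ) (hD : D ≠ 0) :
    (s / 2) ^ 2 * (a / D ^ 3) = 2 * (a / (8 * D ^ 3) * s ^ 2) := by
  have : D ^ 3 ≠ 0 := pow_ne_zero _ hD
  field_simp; ring

lemma prop1_dotProduct_sum {m Ω : Type*} [Fintype m] [Fintype Ω] (v : m → ℝ) (f : Ω → m → ℝ) :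
    v ⬝ᵥ (∑ ω, f ω) = ∑ ω, v ⬝ᵥ f ω := by
  simp only [dotProduct, Finset.sum_apply, Finset.mul_sum]
  exact Finset.sum_comm

lemma prop1_sum_mulVec {m Ω : Type*} [Fintype m] [Fintype Ω] (M : Ω → Matrix m m ℝ) (v : m → ℝ) :
    (∑ ω, M ω) *ᵥ v = ∑ ω, M ω *ᵥ v := by
  funext a
  simp only [Matrix.mulVec, dotProduct, Matrix.sum_apply, Finset.sum_apply,
    Finset.sum_mul]
  exact Finset.sum_comm

lemma prop1_hd1 (a c γ : ℝ) : HasDerivAt (fun γ : ℝ => (1 + Real.exp (a - γ * c))⁻¹)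
    (c * Real.exp (a - γ * c) / (1 + Real.exp (a - γ * c)) ^ 2) γ := by
  have hu : HasDerivAt (fun γ : ℝ => a - γ * c) (-c) γ := by
    simpa using ((hasDerivAt_id γ).mul_const c).const_sub a
  have he : HasDerivAt (fun γ : ℝ => Real.exp (a - γ * c)) (Real.exp (a - γ * c) * (-c)) γ :=
    (Real.hasDerivAt_exp _).comp γ hu
  have h1 : HasDerivAt (fun γ : ℝ => 1 + Real.exp (a - γ * c))
      (Real.exp (a - γ * c) * (-c)) γ := he.const_add 1
  have hne : (1 + Real.exp (a - γ * c)) ≠ 0 := by positivity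
  have := h1.inv hne
  refine this.congr_deriv ?_
  field_simp

lemma prop1_hd2 (a c γ : ℝ) : HasDerivAt
    (fun γ : ℝ => c * Real.exp (a - γ * c) / (1 + Real.exp (a - γ * c)) ^ 2)
    (c ^ 2 * (Real.exp (a - γ * c) * (Real.exp (a - γ * c) - 1) /
      (1 + Real.exp (a - γ * c)) ^ 3)) γ := by
  have hu : HasDerivAt (fun γ : ℝ => a - γ * c) (-c) γ := by
    simpa using ((hasDerivAt_id γ).mul_const c).const_sub a
  have he : HasDerivAt (fun γ : ℝ => Real.exp (a - γ * c)) (Real.exp (a - γ * c) * (-c)) γ :=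
    (Real.hasDerivAt_exp _).comp γ hu
  have hnum : HasDerivAt (fun γ : ℝ => c * Real.exp (a - γ * c))
      (c * (Real.exp (a - γ * c) * (-c))) γ := he.const_mul c
  have hden : HasDerivAt (fun γ : ℝ => (1 + Real.exp (a - γ * c)) ^ 2)
      (2 * (1 + Real.exp (a - γ * c)) ^ 1 * (Real.exp (a - γ * c) * (-c))) γ :=
    (he.const_add 1).pow 2
  have hne : (1 + Real.exp (a - γ * c)) ≠ 0 := by positivity
  have := hnum.div hden (by positivity)
  refine this.congr_deriv ?_
  field_simp
  ring

/-- Taylor data of the summed logistic loss. -/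
lemma prop1_taylor3 {n : ℕ} (z : Fin n → ℝ) (s : ℝ) :
    ∑ j ∈ Finset.range 3, ((j.factorial : ℝ))⁻¹ *
      iteratedDeriv j (fun γ : ℝ => (1 / n : ℝ) * ∑ i, (1 + Real.exp (z i - γ * (s / 2)))⁻¹) 0
    = (1 / n : ℝ) * ∑ i, (1 + Real.exp (z i))⁻¹
      + ((1 / n : ℝ) * ∑ i, Real.exp (z i) / (2 * (1 + Real.exp (z i)) ^ 2)) * s
      + ((1 / n : ℝ) * ∑ i, Real.exp (z i) * (Real.exp (z i) - 1) /
          (8 * (1 + Real.exp (z i)) ^ 3)) * s ^ 2 := by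
  set F : ℝ → ℝ := fun γ => (1 / n : ℝ) * ∑ i, (1 + Real.exp (z i - γ * (s / 2)))⁻¹ with hF
  have hF1 : ∀ γ : ℝ, HasDerivAt F
      ((1 / n : ℝ) * ∑ i, (s / 2) * Real.exp (z i - γ * (s / 2)) /
        (1 + Real.exp (z i - γ * (s / 2))) ^ 2) γ := fun γ =>
    (HasDerivAt.fun_sum fun i _ => prop1_hd1 (z i) (s / 2) γ).const_mul _
  have hDF : deriv F = fun γ => (1 / n : ℝ) * ∑ i, (s / 2) * Real.exp (z i - γ * (s / 2)) /
      (1 + Real.exp (z i - γ * (s / 2))) ^ 2 := funext fun γ => (hF1 γ).deriv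
  have hF2 : ∀ γ : ℝ, HasDerivAt (fun γ => (1 / n : ℝ) * ∑ i,
      (s / 2) * Real.exp (z i - γ * (s / 2)) / (1 + Real.exp (z i - γ * (s / 2))) ^ 2)
      ((1 / n : ℝ) * ∑ i, (s / 2) ^ 2 * (Real.exp (z i - γ * (s / 2)) *
        (Real.exp (z i - γ * (s / 2)) - 1) / (1 + Real.exp (z i - γ * (s / 2))) ^ 3)) γ :=
    fun γ => (HasDerivAt.fun_sum fun i _ => prop1_hd2 (z i) (s / 2) γ).const_mul _
  have e0 : iteratedDeriv 0 F 0 = (1 / n : ℝ) * ∑ i, (1 + Real.exp (z i))⁻¹ := by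
    simp [iteratedDeriv_zero, hF]
  have e1 : iteratedDeriv 1 F 0
      = (1 / n : ℝ) * ∑ i, (s / 2) * Real.exp (z i) / (1 + Real.exp (z i)) ^ 2 := by
    rw [iteratedDeriv_one, hDF]; simp
  have e2 : iteratedDeriv 2 F 0
      = (1 / n : ℝ) * ∑ i, (s / 2) ^ 2 * (Real.exp (z i) * (Real.exp (z i) - 1) /
          (1 + Real.exp (z i)) ^ 3) := by
    have h2 : iteratedDeriv 2 F = deriv (deriv F) := by
      rw [show (2 : ℕ) = 1 + 1 from rfl, iteratedDeriv_succ, iteratedDeriv_one]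
    rw [h2, hDF, (hF2 0).deriv]; simp
  rw [Finset.sum_range_succ, Finset.sum_range_succ, Finset.sum_range_one, e0, e1, e2]
  have hsum1 : ∑ i, (s / 2) * Real.exp (z i) / (1 + Real.exp (z i)) ^ 2
      = (∑ i, Real.exp (z i) / (2 * (1 + Real.exp (z i)) ^ 2)) * s := by
    rw [Finset.sum_mul]
    exact Finset.sum_congr rfl fun i _ => prop1_alg1 s _ _ (by positivity)
  have hsum2 : ∑ i, (s / 2) ^ 2 * (Real.exp (z i) * (Real.exp (z i) - 1) /
        (1 + Real.exp (z i)) ^ 3)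
      = 2 * ((∑ i, Real.exp (z i) * (Real.exp (z i) - 1) /
          (8 * (1 + Real.exp (z i)) ^ 3)) * s ^ 2) := by
    rw [Finset.sum_mul, Finset.mul_sum]
    exact Finset.sum_congr rfl fun i _ => prop1_alg2 s _ _ (by positivity)
  rw [hsum1, hsum2]
  norm_num [Nat.factorial]
  ring

/-- **Proposition 1.**  In the binary-class special case, assuming the mixing
is balanced (`E_{t',σ}[δ_{t,t',σ}] = 0`), the second-order approximation of
`E_{t',σ}[L_mix]` equals `L_singleton + c · θᵀ E_{t',σ}[δ δᵀ] θ`. -/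
theorem proposition1
    {d n : ℕ} (hn : 0 < n)
    {ι ι' Ω : Type*} [Fintype Ω]
    (θ : Fin d → ℝ)
    -- the fixed task `t`: support points, class index sets, query points
    (xs : ι → Fin d → ℝ) (I : Fin 2 → Finset ι)
    (hIne : ∀ k, (I k).Nonempty) (hIdisj : Disjoint (I 0) (I 1))
    (xq : Fin n → Fin d → ℝ)
    -- the finite probability space of outcomes `(t', σ)`
    (p : Ω → ℝ) (hp : ∀ ω, 0 ≤ p ω) (hp1 : ∑ ω, p ω = 1)
    -- each outcome: a second task, a permutation of {1,2}, and mixing coefficients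
    (xs' : Ω → ι' → Fin d → ℝ) (I' : Ω → Fin 2 → Finset ι')
    (hI'ne : ∀ ω k, (I' ω k).Nonempty) (hI'disj : ∀ ω, Disjoint (I' ω 0) (I' ω 1))
    (σ : Ω → Equiv.Perm (Fin 2))
    (α : Ω → ι → ι' → ℝ) (hα : ∀ ω i j, α ω i j ∈ Set.Icc (0 : ℝ) 1) :
    -- class means of the fixed task
    let c' : Fin 2 → Fin d → ℝ := fun k => ((I k).card : ℝ)⁻¹ • ∑ i ∈ I k, xs i
    -- margins and the logistic function
    let z : Fin n → ℝ := fun i => (xq i - (1 / 2 : ℝ) • (c' 0 + c' 1)) ⬝ᵥ θ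
    let ψ : ℝ → ℝ := fun t => Real.exp t / (1 + Real.exp t)
    let Lsingleton : ℝ := (1 / n : ℝ) * ∑ i, 1 / (1 + Real.exp (z i))
    let ccoef : ℝ :=
      (1 / n : ℝ) * ∑ i, (1 / 4 : ℝ) * ψ (z i) * (ψ (z i) - 1 / 2) / (1 + Real.exp (z i))
    -- the per-class and total mixing displacements
    let δk : Ω → Fin 2 → Fin d → ℝ := fun ω k =>
      (((I k).card : ℝ) * ((I' ω (σ ω k)).card : ℝ))⁻¹ •
        ∑ i ∈ I k, ∑ j ∈ I' ω (σ ω k), α ω i j • (xs' ω j - xs i)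
    let δ : Ω → Fin d → ℝ := fun ω => δk ω 0 + δk ω 1
    -- the loss as a function of the two scalar prototypes
    let L : ℝ → ℝ → ℝ := fun c1 c2 =>
      (1 / n : ℝ) * ∑ i, 1 / (1 + Real.exp ((xq i ⬝ᵥ θ) - c1 / 2 - c2 / 2))
    let cc : Fin 2 → ℝ := fun k => θ ⬝ᵥ c' k
    let Δ : Ω → Fin 2 → ℝ := fun ω k => θ ⬝ᵥ δk ω k
    -- balancedness assumption: `E_{t',σ}[δ_{t,t',σ}] = 0`
    (∑ ω, p ω • δ ω) = 0 →
    -- conclusion: the expected second-order Taylor approximation at `γ = 1`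
    (∑ ω, p ω * ∑ j ∈ Finset.range 3, ((j.factorial : ℝ))⁻¹ *
        iteratedDeriv j (fun γ : ℝ => L (cc 0 + γ * Δ ω 0) (cc 1 + γ * Δ ω 1)) 0)
      = Lsingleton +
        ccoef * (θ ⬝ᵥ ((∑ ω, p ω • Matrix.of fun a b => δ ω a * δ ω b) *ᵥ θ)) := by
  intro c' z ψ Lsingleton ccoef δk δ L cc Δ hbal
  set s : Ω → ℝ := fun ω => θ ⬝ᵥ δ ω with hs
  have hsΔ : ∀ ω, Δ ω 0 + Δ ω 1 = s ω := by
    intro ω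
    simp only [hs, Δ, δ, dotProduct_add]
  have hz : ∀ i, z i = (xq i ⬝ᵥ θ) - cc 0 / 2 - cc 1 / 2 := by
    intro i
    simp only [z, cc, sub_dotProduct, smul_dotProduct, add_dotProduct,
      smul_eq_mul, dotProduct_comm θ]
    ring
  have hFeq : ∀ ω, (fun γ : ℝ => L (cc 0 + γ * Δ ω 0) (cc 1 + γ * Δ ω 1))
      = fun γ : ℝ => (1 / n : ℝ) * ∑ i, (1 + Real.exp (z i - γ * (s ω / 2)))⁻¹ := by
    intro ω
    funext γ
    simp only [L, one_div]
    congr 1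
    refine Finset.sum_congr rfl fun i _ => ?_
    congr 2
    rw [hz i, ← hsΔ ω]
    ring
  have hlin : ∑ ω, p ω * s ω = 0 := by
    have h := congrArg (fun v : Fin d → ℝ => θ ⬝ᵥ v) hbal
    simpa [prop1_dotProduct_sum, dotProduct_smul, smul_eq_mul, hs] using h
  have hquadω : ∀ ω, θ ⬝ᵥ ((Matrix.of fun a b => δ ω a * δ ω b) *ᵥ θ) = s ω ^ 2 := by
    intro ω
    simp only [Matrix.mulVec, dotProduct, Matrix.of_apply, hs, pow_two]
    rw [Finset.sum_mul_sum]
    refine Finset.sum_congr rfl fun a _ => ?_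
    rw [Finset.mul_sum]
    exact Finset.sum_congr rfl fun b _ => by ring
  have hquad : θ ⬝ᵥ ((∑ ω, p ω • Matrix.of fun a b => δ ω a * δ ω b) *ᵥ θ)
      = ∑ ω, p ω * s ω ^ 2 := by
    rw [prop1_sum_mulVec, prop1_dotProduct_sum]
    refine Finset.sum_congr rfl fun ω _ => ?_
    rw [Matrix.smul_mulVec, dotProduct_smul, smul_eq_mul, hquadω]
  have hne : ∀ x : ℝ, (1 : ℝ) + Real.exp x ≠ 0 := fun x => by positivity
  have hccoef : ccoef = (1 / n : ℝ) * ∑ i, Real.exp (z i) * (Real.exp (z i) - 1) /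
      (8 * (1 + Real.exp (z i)) ^ 3) := by
    simp only [ccoef, ψ]
    congr 1
    refine Finset.sum_congr rfl fun i _ => ?_
    have h := hne (z i)
    field_simp
    ring
  have hLs : Lsingleton = (1 / n : ℝ) * ∑ i, (1 + Real.exp (z i))⁻¹ := by
    simp only [Lsingleton, one_div]
  have key : ∀ ω, ∑ j ∈ Finset.range 3, ((j.factorial : ℝ))⁻¹ *
      iteratedDeriv j (fun γ : ℝ => L (cc 0 + γ * Δ ω 0) (cc 1 + γ * Δ ω 1)) 0
      = Lsingleton
        + ((1 / n : ℝ) * ∑ i, Real.exp (z i) / (2 * (1 + Real.exp (z i)) ^ 2)) * s ω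
        + ccoef * s ω ^ 2 := by
    intro ω
    rw [hFeq ω, prop1_taylor3 z (s ω), ← hLs, ← hccoef]
  calc (∑ ω, p ω * ∑ j ∈ Finset.range 3, ((j.factorial : ℝ))⁻¹ *
        iteratedDeriv j (fun γ : ℝ => L (cc 0 + γ * Δ ω 0) (cc 1 + γ * Δ ω 1)) 0)
      = ∑ ω, (p ω * Lsingleton
          + ((1 / n : ℝ) * ∑ i, Real.exp (z i) / (2 * (1 + Real.exp (z i)) ^ 2)) * (p ω * s ω)
          + ccoef * (p ω * s ω ^ 2)) := by
        refine Finset.sum_congr rfl fun ω _ => ?_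
        rw [key ω]; ring
    _ = Lsingleton + ccoef * ∑ ω, p ω * s ω ^ 2 := by
        rw [Finset.sum_add_distrib, Finset.sum_add_distrib, ← Finset.sum_mul,
          ← Finset.mul_sum, ← Finset.mul_sum, hp1, hlin]
        ring
    _ = Lsingleton + ccoef * (θ ⬝ᵥ ((∑ ω, p ω • Matrix.of fun a b => δ ω a * δ ω b) *ᵥ θ)) := by
        rw [hquad]

end
end
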